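/- arXiv:2411.06422 — 2 statements merged into one kernel-verified Lean document; each statement's English description precedes it below -/
import Mathlib

section
/- For 0 < p < 1/2, set α₀ = (1-p)/(1-2p) and α₁ = -p/(1-2p). Then (α₀³+α₁³) - 3(α₀α₁²+α₁α₀²) = (1+2p-2p²)/(1-2p)², and this quantity is strictly less than 1/(1-2p)³. -/
/-!
With `d = 1 - 2p`, the coefficients satisfy `α₀ + α₁ = 1` and `α₀ α₁ = -p(1-p)/d²`, so the
symmetric expression `(α₀³ + α₁³) - 3α₀α₁(α₀ + α₁) = (α₀ + α₁)³ - 6α₀α₁(α₀ + α₁)` equals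
`1 + 6p(1-p)/d² = (1 + 2p - 2p²)/d²`. Comparing with `1/d³` amounts to
`(1 + 2p - 2p²) d = 1 - 2p²(3 - 2p) < 1`.
-/

lemma cube_add_cube_sub_three_mul_of_add_eq_one {a b : ℝ} (hab : a + b = 1) :
    (a ^ 3 + b ^ 3) - 3 * (a * b ^ 2 + b * a ^ 2) = 1 - 6 * (a * b) := by
  obtain rfl : b = 1 - a := by linarith
  ring

lemma dephasing_coeffs_add {p : ℝ} (hd : 1 - 2 * p ≠ 0) :
    (1 - p) / (1 - 2 * p) + -p / (1 - 2 * p) = 1 := by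
  rw [← add_div, div_eq_one_iff_eq hd]
  ring

lemma dephasing_coeffs_mul (p : ℝ) :
    (1 - p) / (1 - 2 * p) * (-p / (1 - 2 * p)) = -(p * (1 - p)) / (1 - 2 * p) ^ 2 := by
  rw [div_mul_div_comm, sq]
  ring

lemma one_add_two_mul_sub_two_mul_sq_mul_lt_one {p : ℝ} (hp0 : p ≠ 0) (hp : p < 3 / 2) :
    (1 + 2 * p - 2 * p ^ 2) * (1 - 2 * p) < 1 := by
  have key : 1 - (1 + 2 * p - 2 * p ^ 2) * (1 - 2 * p) = 2 * p ^ 2 * (3 - 2 * p) := by ring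
  have : 0 < 2 * p ^ 2 * (3 - 2 * p) := mul_pos (by positivity) (by linarith)
  linarith

theorem stmt9 (p : ℝ) (hp0 : 0 < p) (hp : p < 1 / 2)
    (α₀ α₁ : ℝ) (hα₀ : α₀ = (1 - p) / (1 - 2 * p)) (hα₁ : α₁ = -p / (1 - 2 * p)) :
    (α₀ ^ 3 + α₁ ^ 3) - 3 * (α₀ * α₁ ^ 2 + α₁ * α₀ ^ 2)
        = (1 + 2 * p - 2 * p ^ 2) / (1 - 2 * p) ^ 2 ∧
    (1 + 2 * p - 2 * p ^ 2) / (1 - 2 * p) ^ 2 < 1 / (1 - 2 * p) ^ 3 := by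
  have hd : 0 < 1 - 2 * p := by linarith
  have hd2 : (1 - 2 * p) ^ 2 ≠ 0 := by positivity
  subst hα₀ hα₁
  constructor
  · rw [cube_add_cube_sub_three_mul_of_add_eq_one (dephasing_coeffs_add hd.ne'),
      dephasing_coeffs_mul, eq_div_iff hd2, sub_mul, mul_assoc, div_mul_cancel₀ _ hd2]
    ring
  · calc (1 + 2 * p - 2 * p ^ 2) / (1 - 2 * p) ^ 2
        = (1 + 2 * p - 2 * p ^ 2) * (1 - 2 * p) / (1 - 2 * p) ^ 3 := by
          rw [pow_succ (1 - 2 * p) 2, mul_div_mul_right _ _ hd.ne']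
      _ < 1 / (1 - 2 * p) ^ 3 :=
          div_lt_div_of_pos_right
            (one_add_two_mul_sub_two_mul_sq_mul_lt_one hp0.ne' (by linarith)) (by positivity)
end

section
/- For 0 < p < 1/2, set α₀ = (1-p)/(1-2p) and α₁ = -p/(1-2p). Define β₀ = α₀⁴ + α₀α₁³ + α₁²α₀² + α₁³α₀, β₁ = 2α₀³α₁ + α₀²α₁² + α₁⁴, and β₂ = 2α₀²α₁² + α₀α₁³ + α₁α₀³. Then β₀ - β₁ - 2β₂ = (1+2p-6p²+4p³)/(1-2p)³, which is strictly less than 1/(1-2p)⁴. -/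
/-! Both sides reduce to polynomial facts in `p` after clearing the denominator `1 - 2p`:
the combination `β₀ - β₁ - 2β₂` equals `α₀⁴ - 4α₀³α₁ - 4α₀²α₁² - α₁⁴`, and multiplying the
claimed value by `(1 - 2p)⁴` leaves `1 - 2p²((2p - 2)² + 1)`, which is below `1` once `p ≠ 0`. -/

theorem beta_combination_eq {K : Type*} [Field K] {p α₀ α₁ : K} (hd : 1 - 2 * p ≠ 0)
    (hα₀ : α₀ = (1 - p) / (1 - 2 * p)) (hα₁ : α₁ = -p / (1 - 2 * p)) :
    (α₀ ^ 4 + α₀ * α₁ ^ 3 + α₁ ^ 2 * α₀ ^ 2 + α₁ ^ 3 * α₀)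
        - (2 * α₀ ^ 3 * α₁ + α₀ ^ 2 * α₁ ^ 2 + α₁ ^ 4)
        - 2 * (2 * α₀ ^ 2 * α₁ ^ 2 + α₀ * α₁ ^ 3 + α₁ * α₀ ^ 3)
      = (1 + 2 * p - 6 * p ^ 2 + 4 * p ^ 3) / (1 - 2 * p) ^ 3 := by
  subst hα₀ hα₁
  -- `field_simp` rewrites the denominator into this form before looking for a nonvanishing proof
  have hd' : 1 - p * 2 ≠ 0 := by rwa [mul_comm] at hd
  field_simp
  ring

theorem block_cost_lt_standard_cost {p : ℝ} (hp : p ≠ 0) (hd : 0 < 1 - 2 * p) :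
    (1 + 2 * p - 6 * p ^ 2 + 4 * p ^ 3) / (1 - 2 * p) ^ 3 < 1 / (1 - 2 * p) ^ 4 := by
  have hmul : (1 + 2 * p - 6 * p ^ 2 + 4 * p ^ 3) * (1 - 2 * p) < 1 := by
    have hsq : 0 < p ^ 2 * ((2 * p - 2) ^ 2 + 1) := by positivity
    linear_combination 2 * hsq
  rw [div_lt_div_iff₀ (by positivity) (by positivity)]
  calc (1 + 2 * p - 6 * p ^ 2 + 4 * p ^ 3) * (1 - 2 * p) ^ 4
      = (1 + 2 * p - 6 * p ^ 2 + 4 * p ^ 3) * (1 - 2 * p) * (1 - 2 * p) ^ 3 := by ring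
    _ < 1 * (1 - 2 * p) ^ 3 := by gcongr

theorem stmt10 (p : ℝ) (hp0 : 0 < p) (hp : p < 1 / 2)
    (α₀ α₁ β₀ β₁ β₂ : ℝ)
    (hα₀ : α₀ = (1 - p) / (1 - 2 * p)) (hα₁ : α₁ = -p / (1 - 2 * p))
    (hβ₀ : β₀ = α₀ ^ 4 + α₀ * α₁ ^ 3 + α₁ ^ 2 * α₀ ^ 2 + α₁ ^ 3 * α₀)
    (hβ₁ : β₁ = 2 * α₀ ^ 3 * α₁ + α₀ ^ 2 * α₁ ^ 2 + α₁ ^ 4)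
    (hβ₂ : β₂ = 2 * α₀ ^ 2 * α₁ ^ 2 + α₀ * α₁ ^ 3 + α₁ * α₀ ^ 3) :
    β₀ - β₁ - 2 * β₂ = (1 + 2 * p - 6 * p ^ 2 + 4 * p ^ 3) / (1 - 2 * p) ^ 3 ∧
    (1 + 2 * p - 6 * p ^ 2 + 4 * p ^ 3) / (1 - 2 * p) ^ 3 < 1 / (1 - 2 * p) ^ 4 := by
  have hd : 0 < 1 - 2 * p := by linarith
  subst hβ₀ hβ₁ hβ₂
  exact ⟨beta_combination_eq hd.ne' hα₀ hα₁, block_cost_lt_standard_cost hp0.ne' hd⟩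
end
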